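/- arXiv:1110.6237 — 3 statements merged into one kernel-verified Lean document; each statement's English description precedes it below -/
import Mathlib

section
/- Let U = (1/2)·[[1+i, √2],[−√2, 1−i]], F = [[0,1],[−i,0]], and N the 2×2 identity matrix. Then U is unitary, and both U⁻¹·F·U and U⁻¹·N·U are diagonal matrices; consequently both fix the line spanned by the first standard basis vector of ℂ². -/
open Matrix

lemma sq2 : (Real.sqrt 2 : ℂ) ^ 2 = 2 := by
  rw [sq, ← Complex.ofReal_mul, Real.mul_self_sqrt (by norm_num)]
  norm_num

lemma sq2re : (((Real.sqrt 2 : ℂ)) ^ 2).re = 2 := by rw [sq2]; norm_num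
lemma sq2im : (((Real.sqrt 2 : ℂ)) ^ 2).im = 0 := by rw [sq2]; norm_num
lemma I3 : Complex.I ^ 3 = -Complex.I := by
  simp [pow_succ, Complex.I_mul_I]

theorem meyer_conjugation_diagonalizes :
    let U : Matrix (Fin 2) (Fin 2) ℂ :=
      (1 / 2 : ℂ) • !![1 + Complex.I, (Real.sqrt 2 : ℂ); -(Real.sqrt 2 : ℂ), 1 - Complex.I]
    let F : Matrix (Fin 2) (Fin 2) ℂ := !![0, 1; -Complex.I, 0]
    let N : Matrix (Fin 2) (Fin 2) ℂ := (1 : Matrix (Fin 2) (Fin 2) ℂ)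
    U ∈ Matrix.unitaryGroup (Fin 2) ℂ ∧
    (U⁻¹ * F * U).IsDiag ∧ (U⁻¹ * N * U).IsDiag ∧
    (∃ c : ℂ, (U⁻¹ * F * U) *ᵥ (Pi.single 0 1 : Fin 2 → ℂ) = c • (Pi.single 0 1 : Fin 2 → ℂ)) ∧
    (∃ c : ℂ, (U⁻¹ * N * U) *ᵥ (Pi.single 0 1 : Fin 2 → ℂ) = c • (Pi.single 0 1 : Fin 2 → ℂ)) := by
  intro U F N
  set s : ℂ := (Real.sqrt 2 : ℂ) with hs
  have hUV : U * ((1 / 2 : ℂ) • !![1 - Complex.I, -s; s, 1 + Complex.I]) = 1 := by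
    show ((1 / 2 : ℂ) • !![1 + Complex.I, s; -s, 1 - Complex.I]) * _ = 1
    ext i j
    fin_cases i <;> fin_cases j <;>
      simp [Matrix.mul_apply, Fin.sum_univ_two, Matrix.one_apply] <;>
      ring_nf <;>
      simp [hs, sq2re, sq2im, I3, Complex.ext_iff] <;> norm_num
  have hVU : ((1 / 2 : ℂ) • !![1 - Complex.I, -s; s, 1 + Complex.I]) * U = 1 := by
    show _ * ((1 / 2 : ℂ) • !![1 + Complex.I, s; -s, 1 - Complex.I]) = 1
    ext i j
    fin_cases i <;> fin_cases j <;>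
      simp [Matrix.mul_apply, Fin.sum_univ_two, Matrix.one_apply] <;>
      ring_nf <;>
      simp [hs, sq2re, sq2im, I3, Complex.ext_iff] <;> norm_num
  have hinv : U⁻¹ = (1 / 2 : ℂ) • !![1 - Complex.I, -s; s, 1 + Complex.I] :=
    Matrix.inv_eq_right_inv hUV
  have hstar : star U = (1 / 2 : ℂ) • !![1 - Complex.I, -s; s, 1 + Complex.I] := by
    show Uᴴ = _
    show ((1 / 2 : ℂ) • !![1 + Complex.I, s; -s, 1 - Complex.I])ᴴ = _
    ext i j
    fin_cases i <;> fin_cases j <;>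
      simp [Matrix.conjTranspose_apply, hs, Complex.ext_iff]
  have hF : U⁻¹ * F * U = !![-(s/2)*(1-Complex.I), 0; 0, (s/2)*(1-Complex.I)] := by
    rw [hinv]
    show _ * !![0, 1; -Complex.I, 0] * ((1 / 2 : ℂ) • !![1 + Complex.I, s; -s, 1 - Complex.I]) = _
    ext i j
    fin_cases i <;> fin_cases j <;>
      simp [Matrix.mul_apply, Fin.sum_univ_two] <;>
      ring_nf <;>
      simp [hs, sq2re, sq2im, I3, Complex.ext_iff] <;> ring_nf
  have hN : U⁻¹ * N * U = 1 := by
    show U⁻¹ * 1 * U = 1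
    rw [mul_one, hinv, hVU]
  refine ⟨⟨by rw [hstar]; exact hVU, by rw [hstar]; exact hUV⟩, ?_, ?_, ?_, ?_⟩
  · rw [hF]; intro i j hij; fin_cases i <;> fin_cases j <;> simp_all
  · rw [hN]; exact Matrix.isDiag_one
  · refine ⟨-(s/2)*(1-Complex.I), ?_⟩
    rw [hF]
    funext i
    fin_cases i <;> simp [Matrix.mulVec, dotProduct, Fin.sum_univ_two, Pi.single]
  · exact ⟨1, by rw [hN, Matrix.one_mulVec, one_smul]⟩
end

section
/- Define f(θr, θg, φr, φg) = cos²(θr−φr) + sin²(θr−φg) + sin²(θg−φr) + sin²(θg−φg). For all real θr, θg, φr, φg, f(θr, θg, φr, φg) ≤ 2 + √2. -/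
open Real

theorem tsirelson_type_bound (θr θg φr φg : ℝ) :
    cos (θr - φr) ^ 2 + sin (θr - φg) ^ 2 + sin (θg - φr) ^ 2 + sin (θg - φg) ^ 2
      ≤ 2 + Real.sqrt 2 := by
  set s := 2*θr - φr - φg with hs
  set u := 2*θg - φr - φg with hu
  set t := φg - φr with ht
  have e1 : cos (θr - φr) ^ 2 = (1 + (cos s * cos t - sin s * sin t)) / 2 := by
    rw [cos_sq, show 2*(θr - φr) = s + t by rw [hs, ht]; ring, cos_add]; ring
  have e2 : sin (θr - φg) ^ 2 = (1 - (cos s * cos t + sin s * sin t)) / 2 := by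
    rw [sin_sq, cos_sq, show 2*(θr - φg) = s - t by rw [hs, ht]; ring, cos_sub]; ring
  have e3 : sin (θg - φr) ^ 2 = (1 - (cos u * cos t - sin u * sin t)) / 2 := by
    rw [sin_sq, cos_sq, show 2*(θg - φr) = u + t by rw [hu, ht]; ring, cos_add]; ring
  have e4 : sin (θg - φg) ^ 2 = (1 - (cos u * cos t + sin u * sin t)) / 2 := by
    rw [sin_sq, cos_sq, show 2*(θg - φg) = u - t by rw [hu, ht]; ring, cos_sub]; ring
  rw [e1, e2, e3, e4]
  have habs : |sin t| + |cos t| ≤ Real.sqrt 2 := by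
    have h0 : 0 ≤ |sin t| + |cos t| := by positivity
    have h2 : (|sin t| + |cos t|) ^ 2 ≤ 2 := by
      nlinarith [sin_sq_add_cos_sq t, sq_abs (sin t), sq_abs (cos t),
        sq_nonneg (|sin t| - |cos t|)]
    calc |sin t| + |cos t| = Real.sqrt ((|sin t| + |cos t|) ^ 2) :=
          (Real.sqrt_sq h0).symm
      _ ≤ Real.sqrt 2 := Real.sqrt_le_sqrt h2
  have b1 : -(sin s * sin t) ≤ |sin t| := by
    calc -(sin s * sin t) ≤ |sin s * sin t| := neg_le_abs _
      _ = |sin s| * |sin t| := abs_mul _ _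
      _ ≤ 1 * |sin t| := by
          exact mul_le_mul_of_nonneg_right (abs_sin_le_one s) (abs_nonneg _)
      _ = |sin t| := one_mul _
  have b2 : -(cos u * cos t) ≤ |cos t| := by
    calc -(cos u * cos t) ≤ |cos u * cos t| := neg_le_abs _
      _ = |cos u| * |cos t| := abs_mul _ _
      _ ≤ 1 * |cos t| := by
          exact mul_le_mul_of_nonneg_right (abs_cos_le_one u) (abs_nonneg _)
      _ = |cos t| := one_mul _
  linarith
end

section
/- Define f(θr, θg, φr, φg) = cos²(θr−φr) + sin²(θr−φg) + sin²(θg−φr) + sin²(θg−φg). The point (θr, θg, φr, φg) = (π/8, 3π/8, 0, 3π/4) is a Nash equilibrium of the game where Player One chooses (θr, θg) and Player Two chooses (φr, φg) and both maximize f: f is maximized over (θr, θg) with (φr, φg) = (0, 3π/4) fixed at (π/8, 3π/8), and maximized over (φr, φg) with (θr, θg) = (π/8, 3π/8) fixed at (0, 3π/4). -/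
open Real

theorem quantum_private_info_nash_equilibrium :
    let f : ℝ → ℝ → ℝ → ℝ → ℝ := fun θr θg φr φg =>
      cos (θr - φr) ^ 2 + sin (θr - φg) ^ 2 + sin (θg - φr) ^ 2 + sin (θg - φg) ^ 2
    (∀ θr θg : ℝ, f θr θg 0 (3 * π / 4) ≤ f (π / 8) (3 * π / 8) 0 (3 * π / 4)) ∧
    (∀ φr φg : ℝ, f (π / 8) (3 * π / 8) φr φg ≤ f (π / 8) (3 * π / 8) 0 (3 * π / 4)) := by
  intro f
  have r2 : Real.sqrt 2 ^ 2 = 2 := Real.sq_sqrt (by norm_num)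
  have r0 : (0:ℝ) ≤ Real.sqrt 2 := Real.sqrt_nonneg 2
  have key : ∀ x : ℝ, cos x + sin x ≤ Real.sqrt 2 := by
    intro x
    have h1 : sin (2*x) ≤ 1 := Real.sin_le_one _
    rw [Real.sin_two_mul] at h1
    have h2 : (cos x + sin x)^2 ≤ 2 := by
      nlinarith [sin_sq_add_cos_sq x]
    calc cos x + sin x ≤ |cos x + sin x| := le_abs_self _
      _ = Real.sqrt ((cos x + sin x)^2) := (Real.sqrt_sq_eq_abs _).symm
      _ ≤ Real.sqrt 2 := Real.sqrt_le_sqrt h2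
  have hc34 : cos (3 * π / 4) = -(Real.sqrt 2 / 2) := by
    have h : (3 * π / 4 : ℝ) = π - π/4 := by ring
    rw [h, Real.cos_pi_sub, Real.cos_pi_div_four]
  have hs34 : sin (3 * π / 4) = Real.sqrt 2 / 2 := by
    have h : (3 * π / 4 : ℝ) = π - π/4 := by ring
    rw [h, Real.sin_pi_sub, Real.sin_pi_div_four]
  have hc38 : cos (3 * π / 8) = sin (π / 8) := by
    have h : (3 * π / 8 : ℝ) = π/2 - π/8 := by ring
    rw [h, Real.cos_pi_div_two_sub]
  have hs38 : sin (3 * π / 8) = cos (π / 8) := by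
    have h : (3 * π / 8 : ℝ) = π/2 - π/8 := by ring
    rw [h, Real.sin_pi_div_two_sub]
  have hab : sin (π/8)^2 + cos (π/8)^2 = 1 := sin_sq_add_cos_sq _
  have h1 : 2 * cos (π/8)^2 - 1 = Real.sqrt 2 / 2 := by
    have h : (π/4:ℝ) = 2*(π/8) := by ring
    rw [← Real.cos_pi_div_four, h, Real.cos_two_mul]
  have h2 : 2 * sin (π/8) * cos (π/8) = Real.sqrt 2 / 2 := by
    have h : (π/4:ℝ) = 2*(π/8) := by ring
    rw [← Real.sin_pi_div_four, h, Real.sin_two_mul]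
  have hval : f (π / 8) (3 * π / 8) 0 (3 * π / 4) = 2 + Real.sqrt 2 := by
    simp only [f, sub_zero, Real.sin_sub, Real.cos_sub, hc34, hs34, hc38, hs38,
      Real.cos_zero, Real.sin_zero, mul_one, mul_zero]
    linear_combination ((cos (π/8) + sin (π/8))^2/2) * r2 + h1 + hab + h2
  rw [hval]
  constructor
  · intro θr θg
    have k1 := key (2*θr)
    rw [Real.cos_two_mul, Real.sin_two_mul] at k1
    have k2 := key (2*θg - π/2)
    rw [Real.cos_sub_pi_div_two, Real.sin_sub_pi_div_two, Real.cos_two_mul,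
      Real.sin_two_mul] at k2
    simp only [f, sub_zero, Real.sin_sub, Real.cos_sub, hc34, hs34,
      Real.cos_zero, Real.sin_zero, mul_one, mul_zero]
    nlinarith [k1, k2, r2, r0, sin_sq_add_cos_sq θr, sin_sq_add_cos_sq θg,
      sq_nonneg (sin θr + cos θr), sq_nonneg (sin θg + cos θg)]
  · intro φr φg
    simp only [f, Real.sin_sub, Real.cos_sub, hc38, hs38]
    nlinarith [hab, h1, h2, r0, sin_sq_add_cos_sq φr, sin_sq_add_cos_sq φg,
      sq_nonneg (sin φr), sq_nonneg (cos φg + sin φg),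
      mul_nonneg r0 (sq_nonneg (cos φg + sin φg)),
      mul_nonneg (sq_nonneg (sin φr)) r0]
end
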